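/- For every integer m ≥ 3, the set of real numbers x ∈ [0,1] whose continued logarithm representation to base m does not contain every digit i ∈ {1,...,m-1} infinitely often has Lebesgue measure zero. -/

import Mathlib

open MeasureTheory

/-- The expanding map `f x = m ^ x mod 1`. -/
noncomputable def f (m : ℕ) (x : ℝ) : ℝ := Int.fract ((m : ℝ) ^ x)

/-!
The inverse branches `T d x = log (d + x) / log m` of `f m` recover `x` from its first digit and
`f m x`, so the points whose first digits form a word `w` lie in the cylinder
`branch m w '' [0, 1]`, with `branch m w = T w₀ ∘ ⋯ ∘ T wₖ`. Each `T d` contracts by the factor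
`1 / log m < 1`, and its slope `1 / ((d + x) log m)` varies by a factor at most `exp ε` over an
interval of length `ε`; hence the branches have bounded distortion, and in every cylinder the
points whose next digit is `i` fill a fraction at least `c > 0` of its length, uniformly in the
cylinder. Avoiding the digit `i` at `n` consecutive positions thus confines a point of a cylinder
to a set of measure at most `(1 - c) ^ n` times its length. A point avoiding `i` from position `N`
on is the image under a branch of a point avoiding `i` altogether, so these points form a
countable union of null sets.
-/

open Set Filter Topology

noncomputable section

def T (m d : ℕ) (x : ℝ) : ℝ := Real.log (d + x) / Real.log m

/-- `branch m w` inverts `(f m)^[w.length]` on the points whose first digits are `w`. -/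
def branch (m : ℕ) : List ℕ → ℝ → ℝ
  | [], x => x
  | d :: w, x => T m d (branch m w x)

def cylLength (m : ℕ) (w : List ℕ) : ℝ := branch m w 1 - branch m w 0

def digitInterval (m d : ℕ) : Set ℝ :=
  Ico (Real.log d / Real.log m) (Real.log (d + 1) / Real.log m)

def avoidSet (m i n : ℕ) : Set ℝ :=
  {x ∈ Ico (0 : ℝ) 1 | ∀ k < n, (f m)^[k] x ∉ digitInterval m i}

end

lemma Real.log_sub_log_le_div {a b : ℝ} (ha : 0 < a) (hb : 0 < b) :
    Real.log b - Real.log a ≤ (b - a) / a := by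
  rw [← Real.log_div hb.ne' ha.ne', sub_div, div_self ha.ne']
  exact Real.log_le_sub_one_of_pos (div_pos hb ha)

lemma Real.div_le_log_sub_log {a b : ℝ} (ha : 0 < a) (hb : 0 < b) :
    (b - a) / b ≤ Real.log b - Real.log a := by
  rw [← Real.log_div hb.ne' ha.ne', sub_div, div_self hb.ne', ← inv_div]
  exact Real.one_sub_inv_le_log_of_pos (div_pos hb ha)

lemma le_mul_exp_of_le_add {a b ε : ℝ} (ha : 1 ≤ a) (hε : 0 ≤ ε) (h : b ≤ a + ε) :
    b ≤ a * Real.exp ε := by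
  nlinarith [Real.add_one_le_exp ε]

lemma one_lt_log_of_three_le {m : ℕ} (hm : 3 ≤ m) : 1 < Real.log m := by
  rw [Real.lt_log_iff_exp_lt (by positivity)]
  exact Real.exp_one_lt_three.trans_le (by exact_mod_cast hm)

section Branches

variable {m d : ℕ} {x y : ℝ}

lemma one_le_natCast_add (hd : 1 ≤ d) (hx : 0 ≤ x) : 1 ≤ (d : ℝ) + x := by
  have : (1 : ℝ) ≤ d := by exact_mod_cast hd
  linarith

lemma T_sub_le (hm : 0 < Real.log m) (hd : 1 ≤ d) (hx : 0 ≤ x) (hxy : x ≤ y) :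
    T m d y - T m d x ≤ (y - x) / ((d + x) * Real.log m) := by
  have hdx : (0 : ℝ) < d + x := one_pos.trans_le (one_le_natCast_add hd hx)
  rw [T, T, ← sub_div, ← div_div, div_le_div_iff_of_pos_right hm]
  simpa using Real.log_sub_log_le_div hdx (by linarith : (0 : ℝ) < d + y)

lemma le_T_sub (hm : 0 < Real.log m) (hd : 1 ≤ d) (hx : 0 ≤ x) (hxy : x ≤ y) :
    (y - x) / ((d + y) * Real.log m) ≤ T m d y - T m d x := by
  have hdx : (0 : ℝ) < d + x := one_pos.trans_le (one_le_natCast_add hd hx)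
  rw [T, T, ← sub_div, ← div_div, div_le_div_iff_of_pos_right hm]
  simpa using Real.div_le_log_sub_log hdx (by linarith : (0 : ℝ) < d + y)

lemma T_le_T (hm : 0 < Real.log m) (hd : 1 ≤ d) (hx : 0 ≤ x) (hxy : x ≤ y) :
    T m d x ≤ T m d y := by
  have hdy := one_le_natCast_add hd (hx.trans hxy)
  have : 0 ≤ (y - x) / ((d + y) * Real.log m) :=
    div_nonneg (sub_nonneg.2 hxy) (mul_nonneg (by linarith) hm.le)
  linarith [le_T_sub hm hd hx hxy]

lemma T_nonneg (hm : 0 < Real.log m) (hd : 1 ≤ d) (hx : 0 ≤ x) : 0 ≤ T m d x :=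
  div_nonneg (Real.log_nonneg (one_le_natCast_add hd hx)) hm.le

lemma T_sub_le_inv_mul (hm : 0 < Real.log m) (hd : 1 ≤ d) (hx : 0 ≤ x) (hxy : x ≤ y) :
    T m d y - T m d x ≤ (Real.log m)⁻¹ * (y - x) := by
  refine (T_sub_le hm hd hx hxy).trans ?_
  rw [inv_mul_eq_div]
  exact div_le_div_of_nonneg_left (sub_nonneg.2 hxy) hm
    (le_mul_of_one_le_left hm.le (one_le_natCast_add hd hx))

@[simp] lemma branch_nil (m : ℕ) (x : ℝ) : branch m [] x = x := rfl

@[simp] lemma branch_cons (m d : ℕ) (w : List ℕ) (x : ℝ) :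
    branch m (d :: w) x = T m d (branch m w x) := rfl

lemma branch_append (m : ℕ) (w w' : List ℕ) (x : ℝ) :
    branch m (w ++ w') x = branch m w (branch m w' x) := by
  induction w with
  | nil => rfl
  | cons d w ih => simp [ih]

variable {w : List ℕ}

lemma branch_nonneg (hm : 0 < Real.log m) (hw : ∀ d ∈ w, 1 ≤ d) (hx : 0 ≤ x) :
    0 ≤ branch m w x := by
  induction w with
  | nil => exact hx
  | cons d w ih =>
    obtain ⟨hd, hw⟩ := List.forall_mem_cons.mp hw
    exact T_nonneg hm hd (ih hw)

lemma branch_le_branch (hm : 0 < Real.log m) (hw : ∀ d ∈ w, 1 ≤ d) (hx : 0 ≤ x)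
    (hxy : x ≤ y) : branch m w x ≤ branch m w y := by
  induction w with
  | nil => exact hxy
  | cons d w ih =>
    obtain ⟨hd, hw⟩ := List.forall_mem_cons.mp hw
    exact T_le_T hm hd (branch_nonneg hm hw hx) (ih hw)

lemma branch_sub_le (hm : 0 < Real.log m) (hw : ∀ d ∈ w, 1 ≤ d) (hx : 0 ≤ x) (hxy : x ≤ y) :
    branch m w y - branch m w x ≤ (Real.log m)⁻¹ ^ w.length * (y - x) := by
  induction w with
  | nil => simp
  | cons d w ih =>
    obtain ⟨hd, hw⟩ := List.forall_mem_cons.mp hw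
    calc T m d (branch m w y) - T m d (branch m w x)
        ≤ (Real.log m)⁻¹ * (branch m w y - branch m w x) :=
          T_sub_le_inv_mul hm hd (branch_nonneg hm hw hx) (branch_le_branch hm hw hx hxy)
      _ ≤ (Real.log m)⁻¹ * ((Real.log m)⁻¹ ^ w.length * (y - x)) := by gcongr; exact ih hw
      _ = (Real.log m)⁻¹ ^ (d :: w).length * (y - x) := by
          rw [List.length_cons, pow_succ]; ring

lemma branch_sub_le_pow (hm : 0 < Real.log m) (hw : ∀ d ∈ w, 1 ≤ d) (hx : 0 ≤ x) (hy : 0 ≤ y)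
    (hy1 : y ≤ 1) : branch m w y - branch m w x ≤ (Real.log m)⁻¹ ^ w.length :=
  calc branch m w y - branch m w x ≤ branch m w 1 - branch m w 0 :=
        sub_le_sub (branch_le_branch hm hw hy hy1) (branch_le_branch hm hw le_rfl hx)
    _ ≤ (Real.log m)⁻¹ ^ w.length * (1 - 0) := branch_sub_le hm hw le_rfl zero_le_one
    _ = (Real.log m)⁻¹ ^ w.length := by ring

end Branches

section Distortion

variable {m : ℕ} {w : List ℕ} {x y : ℝ}

lemma branch_distortion (hm : 0 < Real.log m) (hw : ∀ d ∈ w, 1 ≤ d) {x' y' : ℝ}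
    (hx : 0 ≤ x) (hxy : x ≤ y) (hx' : 0 ≤ x') (hxy' : x' ≤ y') (hy' : y' ≤ 1) :
    (branch m w y - branch m w x) * (y' - x') ≤
      Real.exp (∑ j ∈ Finset.range w.length, (Real.log m)⁻¹ ^ j) *
        (branch m w y' - branch m w x') * (y - x) := by
  induction w with
  | nil => simp [mul_comm]
  | cons d w ih =>
    obtain ⟨hd, hw⟩ := List.forall_mem_cons.mp hw
    set K := Real.exp (∑ j ∈ Finset.range w.length, (Real.log m)⁻¹ ^ j)
    set ε := (Real.log m)⁻¹ ^ w.length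
    set u := branch m w x
    set v := branch m w y
    set u' := branch m w x'
    set v' := branch m w y'
    have hu : 0 ≤ u := branch_nonneg hm hw hx
    have hu' : 0 ≤ u' := branch_nonneg hm hw hx'
    have hv' : 0 ≤ v' := branch_nonneg hm hw (hx'.trans hxy')
    have hdu := one_le_natCast_add hd hu
    -- `u` and `v'` lie in the cylinder of `w`, whose length is at most `ε`
    have hspread : (d : ℝ) + v' ≤ (d + u) * Real.exp ε :=
      le_mul_exp_of_le_add hdu (by positivity)
        (by linarith [branch_sub_le_pow hm hw hx (hx'.trans hxy') hy'])
    have hdv' := one_le_natCast_add hd hv'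
    rw [List.length_cons, Finset.sum_range_succ, Real.exp_add]
    calc (T m d v - T m d u) * (y' - x')
        ≤ (v - u) / ((d + u) * Real.log m) * (y' - x') := by
          gcongr
          exact T_sub_le hm hd hu (branch_le_branch hm hw hx hxy)
      _ = (v - u) * (y' - x') / ((d + u) * Real.log m) := by ring
      _ ≤ K * (v' - u') * (y - x) / ((d + u) * Real.log m) := by
          gcongr ?_ / _
          exact ih hw
      _ = K * (y - x) * ((v' - u') / ((d + v') * Real.log m)) * ((d + v') / (d + u)) := by
          field_simp
      _ ≤ K * (y - x) * (T m d v' - T m d u') * Real.exp ε := by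
          have hTmono := T_le_T hm hd hu' (branch_le_branch hm hw hx' hxy')
          have hTsub := le_T_sub hm hd hu' (branch_le_branch hm hw hx' hxy')
          gcongr
          rw [div_le_iff₀ (by linarith)]
          linarith
      _ = K * Real.exp ε * (T m d v' - T m d u') * (y - x) := by ring

end Distortion

section Cylinders

variable {m : ℕ} {w : List ℕ}

lemma cylLength_mul_le (hm : 1 < Real.log m) (hw : ∀ d ∈ w, 1 ≤ d) {x y : ℝ}
    (hx : 0 ≤ x) (hxy : x ≤ y) (hy : y ≤ 1) :
    cylLength m w * (y - x) ≤
      Real.exp (1 - (Real.log m)⁻¹)⁻¹ * (branch m w y - branch m w x) := by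
  have hm0 : 0 < Real.log m := one_pos.trans hm
  have hθ : (Real.log m)⁻¹ < 1 := inv_lt_one_of_one_lt₀ hm
  have hK : ∑ j ∈ Finset.range w.length, (Real.log m)⁻¹ ^ j ≤ (1 - (Real.log m)⁻¹)⁻¹ := by
    have := geom_sum_Ico_le_of_lt_one (m := 0) (n := w.length) (inv_nonneg.2 hm0.le) hθ
    rwa [← Finset.range_eq_Ico, pow_zero, one_div] at this
  calc cylLength m w * (y - x)
      ≤ Real.exp (∑ j ∈ Finset.range w.length, (Real.log m)⁻¹ ^ j) *
          (branch m w y - branch m w x) * (1 - 0) :=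
        branch_distortion hm0 hw le_rfl zero_le_one hx hxy hy
    _ ≤ Real.exp (1 - (Real.log m)⁻¹)⁻¹ * (branch m w y - branch m w x) := by
        rw [sub_zero, mul_one]
        gcongr
        exact sub_nonneg.2 (branch_le_branch hm0 hw hx hxy)

lemma cylLength_append_singleton (m : ℕ) (w : List ℕ) (d : ℕ) :
    cylLength m (w ++ [d]) = branch m w (T m d 1) - branch m w (T m d 0) := by
  simp [cylLength, branch_append]

lemma sum_cylLength_append_singleton (hm : 1 < m) (w : List ℕ) :
    ∑ d ∈ Finset.Icc 1 (m - 1), cylLength m (w ++ [d]) = cylLength m w := by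
  set F : ℕ → ℝ := fun j => branch m w (Real.log j / Real.log m)
  have hF : ∀ d, cylLength m (w ++ [d]) = F (d + 1) - F d := by
    intro d
    simp [cylLength_append_singleton, T, F]
  have hlog : Real.log m ≠ 0 := (Real.log_pos (by exact_mod_cast hm)).ne'
  have hIcc : Finset.Icc 1 (m - 1) = Finset.Ico 1 m := by
    ext; simp only [Finset.mem_Icc, Finset.mem_Ico]; omega
  rw [Finset.sum_congr hIcc fun d _ => hF d, Finset.sum_Ico_sub F hm.le]
  simp [F, cylLength, div_self hlog]

lemma exists_sum_cylLength_erase_le (hm : 3 ≤ m) {i : ℕ} (hi : i ∈ Finset.Icc 1 (m - 1)) :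
    ∃ r, 0 ≤ r ∧ r < 1 ∧ ∀ w : List ℕ, (∀ d ∈ w, 1 ≤ d) →
      ∑ d ∈ (Finset.Icc 1 (m - 1)).erase i, cylLength m (w ++ [d]) ≤ r * cylLength m w := by
  have hlog := one_lt_log_of_three_le hm
  have hlog0 : 0 < Real.log m := one_pos.trans hlog
  obtain ⟨hi1, him⟩ := Finset.mem_Icc.mp hi
  set K := Real.exp (1 - (Real.log m)⁻¹)⁻¹
  set δ := T m i 1 - T m i 0
  have hK : 1 ≤ K := Real.one_le_exp (inv_nonneg.2 (sub_nonneg.2 (inv_le_one_of_one_le₀ hlog.le)))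
  have hδ0 : 0 < δ := by
    refine lt_of_lt_of_le ?_ (le_T_sub hlog0 hi1 le_rfl zero_le_one)
    positivity
  have hδ1 : δ ≤ 1 := by
    have := T_sub_le_inv_mul hlog0 hi1 le_rfl zero_le_one
    rw [sub_zero, mul_one] at this
    linarith [inv_lt_one_of_one_lt₀ hlog]
  have hT0 : 0 ≤ T m i 0 := T_nonneg hlog0 hi1 le_rfl
  have hT1 : T m i 1 ≤ 1 := by
    rw [T, div_le_one hlog0]
    have : (i : ℝ) + 1 ≤ m := by exact_mod_cast (by omega : i + 1 ≤ m)
    exact Real.log_le_log (by positivity) this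
  have hδK0 : 0 < δ / K := by positivity
  have hδK1 : δ / K ≤ 1 := div_le_one_of_le₀ (hδ1.trans hK) (by positivity)
  refine ⟨1 - δ / K, by linarith, by linarith, fun w hw => ?_⟩
  have hdist := cylLength_mul_le hlog hw hT0 (T_le_T hlog0 hi1 le_rfl zero_le_one) hT1
  rw [← cylLength_append_singleton] at hdist
  have : δ / K * cylLength m w ≤ cylLength m (w ++ [i]) := by
    rw [div_mul_eq_mul_div, div_le_iff₀ (by positivity)]
    linarith
  rw [Finset.sum_erase_eq_sub hi, sum_cylLength_append_singleton (by omega)]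
  linarith

end Cylinders

section Dynamics

variable {m : ℕ}

lemma f_mem_Ico (m : ℕ) (x : ℝ) : f m x ∈ Ico (0 : ℝ) 1 :=
  ⟨Int.fract_nonneg _, Int.fract_lt_one _⟩

lemma iterate_f_mem_Ico {x : ℝ} (hx : x ∈ Ico (0 : ℝ) 1) : ∀ n, (f m)^[n] x ∈ Ico (0 : ℝ) 1
  | 0 => hx
  | n + 1 => by rw [Function.iterate_succ_apply']; exact f_mem_Ico m _

lemma exists_digit (hm : 1 < m) {y : ℝ} (hy : y ∈ Ico (0 : ℝ) 1) :
    ∃ d ∈ Finset.Icc 1 (m - 1), y ∈ digitInterval m d ∧ T m d (f m y) = y := by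
  have hm1 : (1 : ℝ) < m := by exact_mod_cast hm
  have hlog : 0 < Real.log m := Real.log_pos hm1
  set z := (m : ℝ) ^ y
  have hz1 : 1 ≤ z := Real.one_le_rpow hm1.le hy.1
  have hzm : z < m := by simpa using Real.rpow_lt_rpow_of_exponent_lt hm1 hy.2
  have hlogz : Real.log z = y * Real.log m := Real.log_rpow (by positivity) y
  set d := ⌊z⌋₊
  have hd1 : 1 ≤ d := Nat.le_floor (by exact_mod_cast hz1)
  have hdm : d < m := (Nat.floor_lt (by positivity)).mpr hzm
  have hdz : (d : ℝ) ≤ z := Nat.floor_le (by positivity)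
  have hzd : z < d + 1 := Nat.lt_floor_add_one z
  refine ⟨d, Finset.mem_Icc.mpr ⟨hd1, by omega⟩, ⟨?_, ?_⟩, ?_⟩
  · rw [div_le_iff₀ hlog, ← hlogz]
    exact Real.log_le_log (by positivity) hdz
  · rw [lt_div_iff₀ hlog, ← hlogz]
    exact Real.log_lt_log (by positivity) hzd
  · have hfz : f m y = z - d := by
      rw [f, Int.fract, ← natCast_floor_eq_intCast_floor (by positivity)]
    rw [T, hfz, add_sub_cancel, hlogz, mul_div_cancel_right₀ _ hlog.ne']

lemma exists_branch_iterate_eq (hm : 1 < m) (n : ℕ) {x : ℝ} (hx : x ∈ Ico (0 : ℝ) 1) :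
    ∃ w : List ℕ, (∀ d ∈ w, 1 ≤ d) ∧ branch m w ((f m)^[n] x) = x := by
  induction n generalizing x with
  | zero => exact ⟨[], by simp, rfl⟩
  | succ n ih =>
    obtain ⟨d, hd, -, hdx⟩ := exists_digit hm hx
    obtain ⟨w, hw, hwx⟩ := ih (f_mem_Ico m x)
    refine ⟨d :: w, List.forall_mem_cons.mpr ⟨(Finset.mem_Icc.mp hd).1, hw⟩, ?_⟩
    rw [Function.iterate_succ_apply, branch_cons, hwx, hdx]

lemma image_avoidSet_succ_subset (hm : 1 < m) (w : List ℕ) (i n : ℕ) :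
    branch m w '' avoidSet m i (n + 1) ⊆
      ⋃ d ∈ (Finset.Icc 1 (m - 1)).erase i, branch m (w ++ [d]) '' avoidSet m i n := by
  rintro _ ⟨x, ⟨hx, havoid⟩, rfl⟩
  obtain ⟨d, hd, hxd, hdx⟩ := exists_digit hm hx
  have hdi : d ≠ i := by
    rintro rfl
    exact havoid 0 n.succ_pos hxd
  refine mem_iUnion₂.mpr ⟨d, Finset.mem_erase.mpr ⟨hdi, hd⟩, f m x, ⟨f_mem_Ico m x, ?_⟩, ?_⟩
  · intro k hk
    rw [← Function.iterate_succ_apply]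
    exact havoid (k + 1) (by omega)
  · rw [branch_append, branch_cons, branch_nil, hdx]

end Dynamics

section Measure

variable {m i : ℕ}

lemma volume_image_avoidSet_le (hm : 1 < m) {r : ℝ} (hr : 0 ≤ r)
    (hrate : ∀ w : List ℕ, (∀ d ∈ w, 1 ≤ d) →
      ∑ d ∈ (Finset.Icc 1 (m - 1)).erase i, cylLength m (w ++ [d]) ≤ r * cylLength m w)
    (n : ℕ) {w : List ℕ} (hw : ∀ d ∈ w, 1 ≤ d) :
    volume (branch m w '' avoidSet m i n) ≤ ENNReal.ofReal (r ^ n * cylLength m w) := by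
  have hlog : 0 < Real.log m := Real.log_pos (by exact_mod_cast hm)
  induction n generalizing w with
  | zero =>
    have : branch m w '' avoidSet m i 0 ⊆ Icc (branch m w 0) (branch m w 1) := by
      rintro _ ⟨x, ⟨hx, -⟩, rfl⟩
      exact ⟨branch_le_branch hlog hw le_rfl hx.1, branch_le_branch hlog hw hx.1 hx.2.le⟩
    calc volume (branch m w '' avoidSet m i 0)
        ≤ volume (Icc (branch m w 0) (branch m w 1)) := measure_mono this
      _ = ENNReal.ofReal (r ^ 0 * cylLength m w) := by
        rw [Real.volume_Icc, pow_zero, one_mul, cylLength]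
  | succ n ih =>
    set s := (Finset.Icc 1 (m - 1)).erase i
    have hs : ∀ d ∈ s, ∀ d' ∈ w ++ [d], 1 ≤ d' := by
      intro d hd d' hd'
      rcases List.mem_append.mp hd' with h | h
      · exact hw d' h
      · rw [List.mem_singleton.mp h]
        exact (Finset.mem_Icc.mp (Finset.mem_of_mem_erase hd)).1
    calc volume (branch m w '' avoidSet m i (n + 1))
        ≤ ∑ d ∈ s, volume (branch m (w ++ [d]) '' avoidSet m i n) :=
          (measure_mono (image_avoidSet_succ_subset hm w i n)).trans
            (measure_biUnion_finset_le _ _)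
      _ ≤ ∑ d ∈ s, ENNReal.ofReal (r ^ n * cylLength m (w ++ [d])) :=
          Finset.sum_le_sum fun d hd => ih (hs d hd)
      _ = ENNReal.ofReal (r ^ n * ∑ d ∈ s, cylLength m (w ++ [d])) := by
          rw [Finset.mul_sum, ENNReal.ofReal_sum_of_nonneg fun d hd => ?_]
          exact mul_nonneg (pow_nonneg hr n)
            (sub_nonneg.2 (branch_le_branch hlog (hs d hd) le_rfl zero_le_one))
      _ ≤ ENNReal.ofReal (r ^ (n + 1) * cylLength m w) := by
          refine ENNReal.ofReal_le_ofReal ?_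
          rw [pow_succ, mul_assoc]
          exact mul_le_mul_of_nonneg_left (hrate w hw) (pow_nonneg hr n)

lemma volume_eventually_not_mem_digitInterval (hm : 3 ≤ m) (hi : i ∈ Finset.Icc 1 (m - 1)) :
    volume {x ∈ Ico (0 : ℝ) 1 | ∀ᶠ k in atTop, (f m)^[k] x ∉ digitInterval m i} = 0 := by
  obtain ⟨r, hr0, hr1, hrate⟩ := exists_sum_cylLength_erase_le hm hi
  set D := {x ∈ Ico (0 : ℝ) 1 | ∀ k, (f m)^[k] x ∉ digitInterval m i}
  have hD : ∀ w : List ℕ, (∀ d ∈ w, 1 ≤ d) → volume (branch m w '' D) = 0 := by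
    intro w hw
    have hlim : Tendsto (fun n => ENNReal.ofReal (r ^ n * cylLength m w)) atTop (𝓝 0) := by
      simpa using ENNReal.tendsto_ofReal
        ((tendsto_pow_atTop_nhds_zero_of_lt_one hr0 hr1).mul_const (cylLength m w))
    refine le_antisymm (ge_of_tendsto' hlim fun n => ?_) bot_le
    have hDn : D ⊆ avoidSet m i n := fun x hx => ⟨hx.1, fun k _ => hx.2 k⟩
    exact (measure_mono (image_mono hDn)).trans
      (volume_image_avoidSet_le (by omega : 1 < m) hr0 hrate n hw)
  have hcover : {x ∈ Ico (0 : ℝ) 1 | ∀ᶠ k in atTop, (f m)^[k] x ∉ digitInterval m i} ⊆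
      ⋃ (w : List ℕ) (_ : ∀ d ∈ w, 1 ≤ d), branch m w '' D := by
    rintro x ⟨hx, hev⟩
    obtain ⟨N, hN⟩ := eventually_atTop.mp hev
    obtain ⟨w, hw, hwx⟩ := exists_branch_iterate_eq (by omega : 1 < m) N hx
    refine mem_iUnion₂.mpr ⟨w, hw, (f m)^[N] x, ⟨iterate_f_mem_Ico hx N, fun k => ?_⟩, hwx⟩
    rw [← Function.iterate_add_apply]
    exact hN (k + N) (Nat.le_add_left N k)
  exact measure_mono_null hcover (measure_iUnion_null fun w => measure_iUnion_null (hD w))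

end Measure

theorem stmt10 (m : ℕ) (hm : 3 ≤ m) :
    volume {x ∈ Set.Icc (0 : ℝ) 1 | ¬ ∀ i ∈ Finset.Icc 1 (m - 1),
      {k : ℕ | (f m)^[k] x ∈
        Set.Ico (Real.log i / Real.log m) (Real.log (i + 1) / Real.log m)}.Infinite}
      = 0 := by
  have hcover : {x ∈ Set.Icc (0 : ℝ) 1 | ¬ ∀ i ∈ Finset.Icc 1 (m - 1),
      {k : ℕ | (f m)^[k] x ∈
        Set.Ico (Real.log i / Real.log m) (Real.log (i + 1) / Real.log m)}.Infinite} ⊆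
      {1} ∪ ⋃ i ∈ Finset.Icc 1 (m - 1),
        {x ∈ Ico (0 : ℝ) 1 | ∀ᶠ k in atTop, (f m)^[k] x ∉ digitInterval m i} := by
    rintro x ⟨hx, hbad⟩
    obtain ⟨i, hi, hfin⟩ := not_forall₂.mp hbad
    rcases hx.2.eq_or_lt with rfl | hx1
    · exact Or.inl rfl
    · refine Or.inr (mem_iUnion₂.mpr ⟨i, hi, ⟨hx.1, hx1⟩, ?_⟩)
      rwa [← not_frequently, Nat.frequently_atTop_iff_infinite]
  refine measure_mono_null hcover (measure_union_null Real.volume_singleton ?_)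
  exact (measure_biUnion_null_iff (Finset.countable_toSet _)).mpr fun i hi =>
    volume_eventually_not_mem_digitInterval hm hi
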